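/- For real q with 0 < q < 1, x1, x2 in [0,1], natural n >= 1 and 0 <= k <= n-1, we have ((n-k)/n) * B_{k,n}(x1,x2|q) + ((k+1)/n) * B_{k+1,n}(x1,x2|q) = (1 + [x1]_q - [x2]_q) * B_{k,n-1}(x1,x2|q). -/

import Mathlib

/-! Since `[1 - x]_{q⁻¹} = 1 - [x]_q`, the factor `1 + [x₁]_q - [x₂]_q` is the sum `a + b` of the two
bases of the Bernstein terms, and the identity reduces to
`(n - k) C(n, k) = n C(n - 1, k) = (k + 1) C(n, k + 1)`. -/

noncomputable def qNum (q x : ℝ) : ℝ := (1 - q ^ x) / (1 - q)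

noncomputable def qBern (q : ℝ) (k n : ℕ) (x1 x2 : ℝ) : ℝ :=
  (n.choose k : ℝ) * (qNum q x1) ^ k * (qNum q⁻¹ (1 - x2)) ^ (n - k)

lemma qNum_inv_one_sub {q : ℝ} (hq0 : 0 < q) (hq1 : q ≠ 1) (x : ℝ) :
    qNum q⁻¹ (1 - x) = 1 - qNum q x := by
  have hq : 1 - q ≠ 0 := sub_ne_zero.mpr hq1.symm
  have hpow : q⁻¹ ^ (1 - x) = q ^ x / q := by
    rw [Real.inv_rpow hq0.le, ← Real.rpow_neg hq0.le, neg_sub, Real.rpow_sub hq0, Real.rpow_one]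
  rw [qNum, qNum, hpow]
  field_simp
  ring

lemma one_add_qNum_sub_qNum {q : ℝ} (hq0 : 0 < q) (hq1 : q ≠ 1) (x y : ℝ) :
    1 + qNum q x - qNum q y = qNum q x + qNum q⁻¹ (1 - y) := by
  rw [qNum_inv_one_sub hq0 hq1]
  ring

lemma sub_mul_choose_add_succ_mul_choose_succ {R : Type*} [CommRing R] (a b : R) {m k : ℕ}
    (hk : k ≤ m) :
    ((m : R) + 1 - k) * ((m + 1).choose k * a ^ k * b ^ (m + 1 - k))
      + ((k : R) + 1) * ((m + 1).choose (k + 1) * a ^ (k + 1) * b ^ (m - k))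
      = ((m : R) + 1) * ((a + b) * (m.choose k * a ^ k * b ^ (m - k))) := by
  have hleft : ((m + 1).choose k : R) * ((m : R) + 1 - k) = m.choose k * ((m : R) + 1) := by
    have := congrArg (Nat.cast : ℕ → R) (Nat.choose_mul_succ_eq m k)
    push_cast [Nat.succ_sub hk, hk] at this
    linear_combination -this
  have hright : ((m + 1).choose (k + 1) : R) * ((k : R) + 1) = ((m : R) + 1) * m.choose k := by
    have := congrArg (Nat.cast : ℕ → R) (Nat.add_one_mul_choose_eq m k)
    push_cast at this
    linear_combination -this
  rw [Nat.succ_sub hk, pow_succ]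
  linear_combination (a ^ k * b ^ (m - k) * b) * hleft + (a ^ (k + 1) * b ^ (m - k)) * hright

theorem qBern_three_term_general (q : ℝ) (hq0 : 0 < q) (hq1 : q < 1)
    (x1 x2 : ℝ)
    (n k : ℕ) (hn : 1 ≤ n) (hk : k ≤ n - 1) :
    (((n : ℝ) - k) / n) * qBern q k n x1 x2 + (((k : ℝ) + 1) / n) * qBern q (k + 1) n x1 x2
      = (1 + qNum q x1 - qNum q x2) * qBern q k (n - 1) x1 x2 := by
  obtain ⟨m, rfl⟩ : ∃ m, n = m + 1 := ⟨n - 1, by omega⟩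
  have key := sub_mul_choose_add_succ_mul_choose_succ (qNum q x1) (qNum q⁻¹ (1 - x2))
    (show k ≤ m by omega)
  rw [one_add_qNum_sub_qNum hq0 hq1.ne, Nat.add_sub_cancel]
  simp only [qBern]
  push_cast
  rw [div_mul_eq_mul_div, div_mul_eq_mul_div, ← add_div, key,
    mul_div_cancel_left₀ _ (Nat.cast_add_one_ne_zero m)]

theorem qBern_three_term (q : ℝ) (hq0 : 0 < q) (hq1 : q < 1)
    (x1 x2 : ℝ) (hx1 : x1 ∈ Set.Icc (0:ℝ) 1) (hx2 : x2 ∈ Set.Icc (0:ℝ) 1)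
    (n k : ℕ) (hn : 1 ≤ n) (hk : k ≤ n - 1) :
    (((n : ℝ) - k) / n) * qBern q k n x1 x2 + (((k : ℝ) + 1) / n) * qBern q (k + 1) n x1 x2
      = (1 + qNum q x1 - qNum q x2) * qBern q k (n - 1) x1 x2 :=
  qBern_three_term_general q hq0 hq1 x1 x2 n k hn hk
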